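/- The diagonal of the Gerrity scoring matrix satisfies ∑_{e=1}^K p_e s_{e,e} = 1. In other words, a perfect forecaster, whose joint distribution of prediction and observation is concentrated on the diagonal with p_{e,e} = p_e and p_{k̂,e} = 0 for k̂ ≠ e, has Equitable Skill Score ESS = ∑_{k̂,e} p_{k̂,e} s_{k̂,e} = 1. -/

import Mathlib

/-! On the diagonal, `s_{e,e} = (1/(K-1)) ∑_{r=1}^{K-1} (a_r⁻¹ if r < e else a_r)`. Exchanging
the two sums, each threshold `r` contributes `a_r⁻¹ (1 - P_r) + a_r P_r = P_r + (1 - P_r) = 1`,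
and there are `K - 1` thresholds. -/

/-- `Pcum K p r` is the cumulative probability `P_r = ∑_{e=1}^r p_e` of the
first `r` classes (classes are `0`-indexed by `Fin K`, so this sums `p e` over
`e` with `(e : ℕ) < r`). -/
noncomputable def Pcum (K : ℕ) (p : Fin K → ℝ) (r : ℕ) : ℝ :=
  ∑ e ∈ Finset.univ.filter (fun e : Fin K => (e : ℕ) < r), p e

/-- `aG K p r = (1 - P_r) / P_r`. -/
noncomputable def aG (K : ℕ) (p : Fin K → ℝ) (r : ℕ) : ℝ :=
  (1 - Pcum K p r) / Pcum K p r

/-- The Gerrity scoring matrix: for `1`-indexed classes `k̂ ≤ e`,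
`s_{k̂,e} = s_{e,k̂} = (1/(K-1)) (∑_{r=1}^{k̂-1} a_r⁻¹ - (e - k̂) + ∑_{r=e}^{K-1} a_r)`.
Here `j k : Fin K` are the `0`-indexed classes (`j = k̂ - 1`, `k = e - 1`), and
the formula is symmetrized via `min`/`max`. -/
noncomputable def gerrity (K : ℕ) (p : Fin K → ℝ) (j k : Fin K) : ℝ :=
  (1 / ((K : ℝ) - 1)) *
    ((∑ r ∈ Finset.Icc 1 (min (j : ℕ) (k : ℕ)), (aG K p r)⁻¹)
      - (((max (j : ℕ) (k : ℕ) : ℕ) : ℝ) - ((min (j : ℕ) (k : ℕ) : ℕ) : ℝ))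
      + ∑ r ∈ Finset.Icc (max (j : ℕ) (k : ℕ) + 1) (K - 1), aG K p r)

open Finset

section

variable {K : ℕ} {p : Fin K → ℝ}

theorem Pcum_add_sum_filter_le (p : Fin K → ℝ) (r : ℕ) :
    Pcum K p r + ∑ e ∈ univ.filter (fun e : Fin K => r ≤ (e : ℕ)), p e = ∑ e, p e := by
  unfold Pcum
  simpa only [not_lt] using sum_filter_add_sum_filter_not univ (fun e : Fin K => (e : ℕ) < r) p

theorem Pcum_pos (hp : ∀ e, 0 < p e) {r : ℕ} (hr : 0 < r) (hK : 0 < K) : 0 < Pcum K p r :=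
  sum_pos (fun e _ => hp e) ⟨⟨0, hK⟩, by simpa using hr⟩

theorem sum_filter_le_pos (hp : ∀ e, 0 < p e) {r : ℕ} (hrK : r < K) :
    0 < ∑ e ∈ univ.filter (fun e : Fin K => r ≤ (e : ℕ)), p e :=
  sum_pos (fun e _ => hp e) ⟨⟨r, hrK⟩, by simp⟩

theorem sum_mul_ite_aG_eq_one (hp : ∀ e, 0 < p e) (hpsum : ∑ e, p e = 1) {r : ℕ}
    (hr : 0 < r) (hrK : r < K) :
    ∑ e : Fin K, p e * (if r ≤ (e : ℕ) then (aG K p r)⁻¹ else aG K p r) = 1 := by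
  set Q := ∑ e ∈ univ.filter (fun e : Fin K => r ≤ (e : ℕ)), p e
  have hPQ : Pcum K p r + Q = 1 := hpsum ▸ Pcum_add_sum_filter_le p r
  have hP := Pcum_pos hp hr (hr.trans hrK)
  have hQ : 0 < Q := sum_filter_le_pos hp hrK
  have ha : aG K p r = Q / Pcum K p r := by rw [aG, ← hPQ, add_sub_cancel_left]
  calc ∑ e : Fin K, p e * (if r ≤ (e : ℕ) then (aG K p r)⁻¹ else aG K p r)
      = (aG K p r)⁻¹ * Q + aG K p r * Pcum K p r := by
        simp only [mul_ite, sum_ite, ← sum_mul, not_le, Pcum, Q]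
        ring
    _ = Pcum K p r + Q := by rw [ha]; field_simp
    _ = 1 := hPQ

theorem gerrity_self (p : Fin K → ℝ) (j : Fin K) :
    gerrity K p j j = 1 / ((K : ℝ) - 1) *
      ∑ r ∈ Icc 1 (K - 1), if r ≤ (j : ℕ) then (aG K p r)⁻¹ else aG K p r := by
  have hj := j.isLt
  have hlow : (Icc 1 (K - 1)).filter (· ≤ (j : ℕ)) = Icc 1 (j : ℕ) := by
    ext r; simp only [mem_filter, mem_Icc]; omega
  have hhigh : (Icc 1 (K - 1)).filter (¬ · ≤ (j : ℕ)) = Icc ((j : ℕ) + 1) (K - 1) := by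
    ext r; simp only [mem_filter, mem_Icc]; omega
  rw [gerrity, sum_ite, hlow, hhigh, min_self, max_self, sub_self, sub_zero]

end

/-- The diagonal of the Gerrity scoring matrix satisfies `∑_e p_e s_{e,e} = 1`:
a perfect forecaster, whose joint distribution is concentrated on the diagonal
with `p_{e,e} = p_e`, has Equitable Skill Score `1`. -/
theorem gerrity_perfect_forecaster
    (K : ℕ) (hK : 2 ≤ K) (p : Fin K → ℝ)
    (hp : ∀ e, 0 < p e) (hpsum : ∑ e, p e = 1) :
    ∑ e, p e * gerrity K p e e = 1 := by
  have hK1 : (K : ℝ) - 1 ≠ 0 := sub_ne_zero.mpr (by exact_mod_cast (by omega : K ≠ 1))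
  have hcolumn : ∀ r ∈ Icc 1 (K - 1),
      ∑ e : Fin K, p e * (if r ≤ (e : ℕ) then (aG K p r)⁻¹ else aG K p r) = 1 := by
    intro r hr
    rw [mem_Icc] at hr
    exact sum_mul_ite_aG_eq_one hp hpsum (by omega) (by omega)
  calc ∑ e, p e * gerrity K p e e
      = 1 / ((K : ℝ) - 1) * ∑ r ∈ Icc 1 (K - 1),
          ∑ e : Fin K, p e * (if r ≤ (e : ℕ) then (aG K p r)⁻¹ else aG K p r) := by
        simp only [gerrity_self, mul_sum, mul_left_comm (p _)]
        exact sum_comm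
    _ = 1 / ((K : ℝ) - 1) * ((K : ℝ) - 1) := by
        rw [sum_congr rfl hcolumn, sum_const, Nat.card_Icc, nsmul_one,
          Nat.add_sub_cancel, Nat.cast_pred (by omega)]
    _ = 1 := one_div_mul_cancel hK1
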